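/- arXiv:1709.05977 — 2 statements merged into one kernel-verified Lean document; each statement's English description precedes it below -/
import Mathlib

section
/- Let X be a real Hilbert space and let G : X → X* be continuously Fréchet differentiable with Lipschitz-continuous derivative: ‖δG(u) − δG(v)‖_{L(X,X*)} ≤ M‖u − v‖ for all u, v ∈ X. Suppose ū ∈ X satisfies ‖G(ū)‖_{X*} ≤ η and the coercivity bound ⟨δG(ū)v, v⟩ ≥ γ‖v‖² for all v ∈ X, where the constants M, η, γ > 0 satisfy 2Mη/γ² < 1. Then there exists u ∈ X such that G(u) = 0, ‖u − ū‖ ≤ 2η/γ, and ⟨δG(u)v, v⟩ ≥ (1 − 2Mη/γ²)γ‖v‖² for all v ∈ X. -/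
/-!
Lax–Milgram makes `A = δG ū` an isomorphism `X ≃ X*` with `‖A⁻¹‖ ≤ 1/γ`, so the zeros of `G` are
the fixed points of the simplified Newton map `T x = x - A⁻¹ (G x)`. Put `r = 2η/γ`. On the closed
ball `B(ū, r)` we have `‖δG x - A‖ ≤ M r`, so by the mean value inequality `T` is Lipschitz with
constant `M r / γ = 2Mη/γ² < 1`; and the second-order Taylor bound
`‖G x - G ū - A (x - ū)‖ ≤ M/2 ‖x - ū‖²` gives `‖T x - ū‖ ≤ (M r²/2 + η)/γ ≤ r`, so `T` maps the
ball into itself. Banach's fixed point theorem yields the zero `u`, and at `u` coercivity survives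
with constant `γ - ‖δG u - A‖ ≥ γ - M r = (1 - 2Mη/γ²) γ`.
-/

open Set Metric

section Taylor

variable {E F : Type*} [NormedAddCommGroup E] [NormedSpace ℝ E] [NormedAddCommGroup F]
  [NormedSpace ℝ F]

theorem norm_image_sub_sub_fderiv_le_of_lipschitz {f : E → F} {f' : E → E →L[ℝ] F} {M : ℝ}
    (hf : ∀ x, HasFDerivAt f (f' x) x) (hf' : ∀ x y, ‖f' x - f' y‖ ≤ M * ‖x - y‖) (x y : E) :
    ‖f y - f x - f' x (y - x)‖ ≤ M / 2 * ‖y - x‖ ^ 2 := by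
  set h := y - x
  let φ : ℝ → F := fun t => f (x + t • h) - f x - t • f' x h
  have hφ : ∀ t, HasDerivAt φ (f' (x + t • h) h - f' x h) t := fun t => by
    have hline : HasDerivAt (fun s : ℝ => x + s • h) h t := by
      simpa using ((hasDerivAt_id t).smul_const h).const_add x
    exact (((hf _).comp_hasDerivAt t hline).sub_const (f x)).sub
      (by simpa using (hasDerivAt_id t).smul_const (f' x h))
  have hB : ∀ t : ℝ, HasDerivAt (fun t => M / 2 * ‖h‖ ^ 2 * t ^ 2) (M * ‖h‖ ^ 2 * t) t :=
    fun t => ((hasDerivAt_pow 2 t).const_mul _).congr_deriv (by push_cast; ring)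
  have hφ' : ∀ t ∈ Ico (0 : ℝ) 1, ‖f' (x + t • h) h - f' x h‖ ≤ M * ‖h‖ ^ 2 * t := by
    rintro t ⟨ht, -⟩
    calc ‖f' (x + t • h) h - f' x h‖ = ‖(f' (x + t • h) - f' x) h‖ := rfl
      _ ≤ ‖f' (x + t • h) - f' x‖ * ‖h‖ := ContinuousLinearMap.le_opNorm _ _
      _ ≤ M * ‖x + t • h - x‖ * ‖h‖ := by gcongr; exact hf' _ _
      _ = M * ‖h‖ ^ 2 * t := by
        rw [add_sub_cancel_left, norm_smul, Real.norm_of_nonneg ht]; ring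
  have := image_norm_le_of_norm_deriv_right_le_deriv_boundary
    (continuous_iff_continuousAt.2 fun t => (hφ t).continuousAt).continuousOn
    (fun t _ => (hφ t).hasDerivWithinAt) (by simp [φ]) hB hφ' (right_mem_Icc.2 zero_le_one)
  simpa [φ, h] using this

end Taylor

section Newton

variable {E F : Type*} [NormedAddCommGroup E] [NormedSpace ℝ E] [CompleteSpace E]
  [NormedAddCommGroup F] [NormedSpace ℝ F]

theorem exists_zero_mem_closedBall_of_linearEquiv {G : E → F} {G' : E → E →L[ℝ] F}
    {M η γ : ℝ} (hG : ∀ x, HasFDerivAt G (G' x) x) (hG' : ∀ x y, ‖G' x - G' y‖ ≤ M * ‖x - y‖)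
    (hM : 0 ≤ M) (hγ : 0 < γ) {x₀ : E} (A : E ≃ₗ[ℝ] F) (hA : ∀ x, A x = G' x₀ x)
    (hAinv : ∀ y, ‖A.symm y‖ ≤ γ⁻¹ * ‖y‖) (hx₀ : ‖G x₀‖ ≤ η) (hsmall : 2 * M * η / γ ^ 2 < 1) :
    ∃ x ∈ closedBall x₀ (2 * η / γ), G x = 0 := by
  have hη : 0 ≤ η := (norm_nonneg _).trans hx₀
  let T : E → E := fun x => x - A.symm (G x)
  have hT : ∀ x y, T x - T y = -A.symm (G x - G y - G' x₀ (x - y)) := fun x y => by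
    simp only [T, map_sub, ← hA, A.symm_apply_apply]; abel
  have hmaps : MapsTo T (closedBall x₀ (2 * η / γ)) (closedBall x₀ (2 * η / γ)) := fun x hx => by
    rw [mem_closedBall_iff_norm] at hx ⊢
    have hTx : T x - x₀ = -A.symm (G x - G x₀ - G' x₀ (x - x₀) + G x₀) := by
      simp only [T, map_add, map_sub, ← hA, A.symm_apply_apply]; abel
    have hrem := norm_image_sub_sub_fderiv_le_of_lipschitz hG hG' x₀ x
    calc ‖T x - x₀‖ ≤ γ⁻¹ * ‖G x - G x₀ - G' x₀ (x - x₀) + G x₀‖ := by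
          rw [hTx, norm_neg]; exact hAinv _
      _ ≤ γ⁻¹ * (M / 2 * ‖x - x₀‖ ^ 2 + η) := by
          gcongr; exact (norm_add_le _ _).trans (add_le_add hrem hx₀)
      _ ≤ γ⁻¹ * (M / 2 * (2 * η / γ) ^ 2 + η) := by gcongr
      _ = η / γ * (2 * M * η / γ ^ 2 + 1) := by field_simp
      _ ≤ η / γ * 2 := by gcongr; linarith
      _ = 2 * η / γ := by ring
  have hlip :
      LipschitzOnWith (Real.toNNReal (2 * M * η / γ ^ 2)) T (closedBall x₀ (2 * η / γ)) := by
    refine LipschitzOnWith.of_dist_le' fun x hx y hy => ?_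
    have hmvt : ‖G x - G y - G' x₀ (x - y)‖ ≤ M * (2 * η / γ) * ‖x - y‖ :=
      (convex_closedBall x₀ _).norm_image_sub_le_of_norm_hasFDerivWithin_le'
        (fun z _ => (hG z).hasFDerivWithinAt)
        (fun z hz => (hG' z x₀).trans (by gcongr; exact mem_closedBall_iff_norm.1 hz)) hy hx
    rw [dist_eq_norm, dist_eq_norm, hT, norm_neg]
    calc ‖A.symm (G x - G y - G' x₀ (x - y))‖ ≤ γ⁻¹ * (M * (2 * η / γ) * ‖x - y‖) :=
          (hAinv _).trans (by gcongr)
      _ = 2 * M * η / γ ^ 2 * ‖x - y‖ := by field_simp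
  obtain ⟨x, hx, hfix, -⟩ := ContractingWith.exists_fixedPoint' isClosed_closedBall.isComplete
    hmaps ⟨by simpa using hsmall, hlip.mapsToRestrict hmaps⟩
    (mem_closedBall_self (by positivity)) (edist_ne_top _ _)
  refine ⟨x, hx, ?_⟩
  simpa [T, Function.IsFixedPt] using hfix

theorem exists_zero_mem_closedBall_of_fderiv_lipschitz {G : E → F} {G' : E → E →L[ℝ] F}
    {M η γ : ℝ} (hG : ∀ x, HasFDerivAt G (G' x) x) (hG' : ∀ x y, ‖G' x - G' y‖ ≤ M * ‖x - y‖)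
    (hM : 0 ≤ M) (hγ : 0 < γ) {x₀ : E} (hsurj : Function.Surjective (G' x₀))
    (hbelow : ∀ x, γ * ‖x‖ ≤ ‖G' x₀ x‖) (hx₀ : ‖G x₀‖ ≤ η) (hsmall : 2 * M * η / γ ^ 2 < 1) :
    ∃ x ∈ closedBall x₀ (2 * η / γ), G x = 0 := by
  have hinj : Function.Injective (G' x₀) := fun x y hxy => by
    have := hbelow (x - y)
    rw [map_sub, hxy, sub_self, norm_zero] at this
    exact sub_eq_zero.1 (norm_le_zero_iff.1 (nonpos_of_mul_nonpos_right this hγ))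
  let A := LinearEquiv.ofBijective (G' x₀ : E →ₗ[ℝ] F) ⟨hinj, hsurj⟩
  have hA : ∀ x, A x = G' x₀ x := fun _ => rfl
  refine exists_zero_mem_closedBall_of_linearEquiv hG hG' hM hγ A hA (fun y => ?_) hx₀ hsmall
  have := hbelow (A.symm y)
  rwa [← hA, A.apply_symm_apply, ← le_div_iff₀' hγ, ← inv_mul_eq_div] at this

end Newton

section Coercive

variable {V : Type*} [NormedAddCommGroup V] [NormedSpace ℝ V] {B : V →L[ℝ] V →L[ℝ] ℝ} {γ : ℝ}

theorem mul_norm_le_norm_apply_of_coercive (hB : ∀ v, γ * ‖v‖ ^ 2 ≤ B v v) (v : V) :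
    γ * ‖v‖ ≤ ‖B v‖ := by
  rcases (norm_nonneg v).eq_or_lt with hv | hv
  · simp [← hv]
  refine le_of_mul_le_mul_right ?_ hv
  calc γ * ‖v‖ * ‖v‖ = γ * ‖v‖ ^ 2 := by ring
    _ ≤ B v v := hB v
    _ ≤ ‖B v‖ * ‖v‖ := (le_abs_self _).trans ((B v).le_opNorm v)

theorem sub_norm_sub_mul_sq_le_of_coercive (hB : ∀ v, γ * ‖v‖ ^ 2 ≤ B v v)
    (B' : V →L[ℝ] V →L[ℝ] ℝ) (v : V) : (γ - ‖B' - B‖) * ‖v‖ ^ 2 ≤ B' v v := by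
  have hdiff : |(B' - B) v v| ≤ ‖B' - B‖ * ‖v‖ ^ 2 := by
    calc |(B' - B) v v| ≤ ‖(B' - B) v‖ * ‖v‖ := ((B' - B) v).le_opNorm v
      _ ≤ ‖B' - B‖ * ‖v‖ * ‖v‖ := by gcongr; exact (B' - B).le_opNorm v
      _ = ‖B' - B‖ * ‖v‖ ^ 2 := by ring
  have := hB v
  simp only [sub_apply] at hdiff
  linarith [neg_abs_le (B' v v - B v v)]

end Coercive

theorem IsCoercive.surjective {V : Type*} [NormedAddCommGroup V] [InnerProductSpace ℝ V]
    [CompleteSpace V] {B : V →L[ℝ] V →L[ℝ] ℝ} (hB : IsCoercive B) : Function.Surjective B := by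
  intro f
  obtain ⟨w, hw⟩ :=
    hB.continuousLinearEquivOfBilin.surjective ((InnerProductSpace.toDual ℝ V).symm f)
  refine ⟨w, ContinuousLinearMap.ext fun v => ?_⟩
  rw [← hB.continuousLinearEquivOfBilin_apply, hw, InnerProductSpace.toDual_symm_apply]

theorem stmt_0_general {X : Type*} [NormedAddCommGroup X] [InnerProductSpace ℝ X] [CompleteSpace X]
    (G : X → (X →L[ℝ] ℝ)) (δG : X → X →L[ℝ] (X →L[ℝ] ℝ))
    (hdiff : ∀ u : X, HasFDerivAt G (δG u) u)
    (M η γ : ℝ) (hM : 0 < M) (hγ : 0 < γ)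
    (hLip : ∀ u v : X, ‖δG u - δG v‖ ≤ M * ‖u - v‖)
    (ubar : X) (hcons : ‖G ubar‖ ≤ η)
    (hstab : ∀ v : X, γ * ‖v‖ ^ 2 ≤ δG ubar v v)
    (hrel : 2 * M * η / γ ^ 2 < 1) :
    ∃ u : X, G u = 0 ∧ ‖u - ubar‖ ≤ 2 * η / γ ∧
      ∀ v : X, (1 - 2 * M * η / γ ^ 2) * γ * ‖v‖ ^ 2 ≤ δG u v v := by
  have hcoer : IsCoercive (δG ubar) :=
    ⟨γ, hγ, fun v => by simpa only [mul_assoc, ← sq] using hstab v⟩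
  obtain ⟨u, hu, hGu⟩ := exists_zero_mem_closedBall_of_fderiv_lipschitz hdiff hLip hM.le hγ
    hcoer.surjective (mul_norm_le_norm_apply_of_coercive hstab) hcons hrel
  rw [mem_closedBall_iff_norm] at hu
  refine ⟨u, hGu, hu, fun v => le_trans ?_ (sub_norm_sub_mul_sq_le_of_coercive hstab (δG u) v)⟩
  gcongr
  calc (1 - 2 * M * η / γ ^ 2) * γ = γ - M * (2 * η / γ) := by field_simp
    _ ≤ γ - M * ‖u - ubar‖ := by gcongr
    _ ≤ γ - ‖δG u - δG ubar‖ := by linarith [hLip u ubar]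

/-- **Inverse function theorem / quantitative existence result.**
Let `X` be a real Hilbert space, `G : X → X*` continuously Fréchet differentiable with
Lipschitz derivative `δG` (constant `M`). If `ubar` satisfies `‖G ubar‖ ≤ η`, the coercivity
`⟨δG(ubar)v, v⟩ ≥ γ‖v‖²`, and `2Mη/γ² < 1`, then there is `u` with `G u = 0`,
`‖u - ubar‖ ≤ 2η/γ`, and `⟨δG(u)v, v⟩ ≥ (1 - 2Mη/γ²)γ‖v‖²`. -/
theorem stmt_0 {X : Type*} [NormedAddCommGroup X] [InnerProductSpace ℝ X] [CompleteSpace X]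
    (G : X → (X →L[ℝ] ℝ)) (δG : X → X →L[ℝ] (X →L[ℝ] ℝ))
    (hdiff : ∀ u : X, HasFDerivAt G (δG u) u)
    (M η γ : ℝ) (hM : 0 < M) (hη : 0 < η) (hγ : 0 < γ)
    (hLip : ∀ u v : X, ‖δG u - δG v‖ ≤ M * ‖u - v‖)
    (ubar : X) (hcons : ‖G ubar‖ ≤ η)
    (hstab : ∀ v : X, γ * ‖v‖ ^ 2 ≤ δG ubar v v)
    (hrel : 2 * M * η / γ ^ 2 < 1) :
    ∃ u : X, G u = 0 ∧ ‖u - ubar‖ ≤ 2 * η / γ ∧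
      ∀ v : X, (1 - 2 * M * η / γ ^ 2) * γ * ‖v‖ ^ 2 ≤ δG u v v :=
  stmt_0_general G δG hdiff M η γ hM hγ hLip ubar hcons hstab hrel
end

section
/- Let R > 0, M ≥ 0, and let (a_k)_{k ∈ ℤ} be complex numbers with ∑_{k ∈ ℤ} |a_k|² ≤ M². Let w(z) := ∑_{k ∈ ℤ} a_k (R/|z|)^{|k|} (z/|z|)^k on {z ∈ ℂ : |z| > R}. Then there is an absolute constant C > 0 (independent of R, M and the coefficients) such that the second derivative of w satisfies ‖D²w(z)‖ ≤ C M R |z|^{-3} for all z with |z| ≥ (3/2)R. -/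
/-!
For `R < |w|` the series splits as `a₀ + P w + Q (conj w)`, where `P w = ∑_{n ≥ 1} a_{-n} (R/w)ⁿ`
and `Q v = ∑_{n ≥ 1} aₙ (R/v)ⁿ` are holomorphic. Since `|aₖ| ≤ M`, both are bounded by
`M q / (1 - q)` with `q = R/|w|`, which is `O(M R / |z|)` on the disc of radius `|z|/6` around
`z`, so Cauchy's estimate bounds `P''(z)` and `Q''(conj z)` by `O(M R / |z|³)`. For a holomorphic
function the real Hessian has the same norm as the complex second derivative, and conjugation
is a linear isometry.
-/

open Complex ComplexConjugate Metric Filter Topology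

noncomputable def outerSeries (b : ℕ → ℂ) (u : ℂ) : ℂ := ∑' n : ℕ, b n * u ^ (n + 1)

lemma hasSum_geometric_succ_of_lt_one {r : ℝ} (h₀ : 0 ≤ r) (h₁ : r < 1) :
    HasSum (fun n : ℕ => r ^ (n + 1)) (r / (1 - r)) := by
  simpa [pow_succ', div_eq_mul_inv] using (hasSum_geometric_of_lt_one h₀ h₁).mul_left r

lemma norm_div_lt_one {R : ℝ} (hR : 0 ≤ R) {w : ℂ} (hw : R < ‖w‖) : ‖(R : ℂ) / w‖ < 1 := by
  rw [norm_div, norm_real, Real.norm_of_nonneg hR, div_lt_one (hR.trans_lt hw)]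
  exact hw

lemma norm_iteratedFDeriv_real_eq_norm_iteratedDeriv {f : ℂ → ℂ} {z : ℂ} {n : ℕ}
    (hf : ContDiffAt ℂ n f z) : ‖iteratedFDeriv ℝ n f z‖ = ‖iteratedDeriv n f z‖ := by
  rw [← hf.restrictScalars_iteratedFDeriv (𝕜 := ℝ), Function.comp_apply,
    ContinuousMultilinearMap.norm_restrictScalars, norm_iteratedFDeriv_eq_norm_iteratedDeriv]

section OuterSeries

variable {b : ℕ → ℂ} {M : ℝ}

lemma norm_outerSeries_term_le (hb : ∀ n, ‖b n‖ ≤ M) (u : ℂ) (n : ℕ) :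
    ‖b n * u ^ (n + 1)‖ ≤ M * ‖u‖ ^ (n + 1) := by
  rw [norm_mul, norm_pow]
  gcongr
  exact hb n

lemma summable_outerSeries_term (hb : ∀ n, ‖b n‖ ≤ M) {u : ℂ} (hu : ‖u‖ < 1) :
    Summable fun n => b n * u ^ (n + 1) :=
  .of_norm_bounded ((hasSum_geometric_succ_of_lt_one (norm_nonneg u) hu).summable.mul_left M)
    (norm_outerSeries_term_le hb u)

lemma norm_outerSeries_le (hb : ∀ n, ‖b n‖ ≤ M) {u : ℂ} (hu : ‖u‖ < 1) :
    ‖outerSeries b u‖ ≤ M * ‖u‖ / (1 - ‖u‖) := by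
  have hgeom := (hasSum_geometric_succ_of_lt_one (norm_nonneg u) hu).mul_left M
  calc ‖outerSeries b u‖ ≤ ∑' n : ℕ, ‖b n * u ^ (n + 1)‖ :=
        norm_tsum_le_tsum_norm (summable_outerSeries_term hb hu).norm
    _ ≤ ∑' n : ℕ, M * ‖u‖ ^ (n + 1) :=
        (summable_outerSeries_term hb hu).norm.tsum_le_tsum (norm_outerSeries_term_le hb u)
          hgeom.summable
    _ = M * ‖u‖ / (1 - ‖u‖) := by rw [hgeom.tsum_eq, mul_div_assoc]

lemma differentiableOn_outerSeries (hb : ∀ n, ‖b n‖ ≤ M) :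
    DifferentiableOn ℂ (outerSeries b) (ball 0 1) := by
  intro u hu
  obtain ⟨r, hur, hr⟩ := exists_between (mem_ball_zero_iff.mp hu)
  have hr₀ : 0 ≤ r := (norm_nonneg u).trans hur.le
  have hdiff : DifferentiableOn ℂ (outerSeries b) (ball 0 r) :=
    differentiableOn_tsum_of_summable_norm
      ((hasSum_geometric_succ_of_lt_one hr₀ hr).summable.mul_left M)
      (fun n => (differentiable_id.pow _).const_mul _ |>.differentiableOn) isOpen_ball
      fun n v hv => (norm_outerSeries_term_le hb v n).trans <| by
        have hM : 0 ≤ M := (norm_nonneg _).trans (hb 0)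
        gcongr
        exact (mem_ball_zero_iff.mp hv).le
  exact (hdiff.differentiableAt (isOpen_ball.mem_nhds (mem_ball_zero_iff.mpr hur)))
    |>.differentiableWithinAt

variable {R : ℝ} {z : ℂ}

lemma differentiableOn_outerSeries_div (hb : ∀ n, ‖b n‖ ≤ M) (hR : 0 ≤ R) :
    DifferentiableOn ℂ (fun w => outerSeries b (R / w)) {w | R < ‖w‖} := by
  refine (differentiableOn_outerSeries hb).comp
    (differentiableOn_const _ |>.div differentiableOn_id fun w hw => ?_) fun w hw => ?_
  · exact norm_pos_iff.mp (hR.trans_lt hw)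
  · exact mem_ball_zero_iff.mpr (norm_div_lt_one hR hw)

lemma contDiffAt_outerSeries_div (hb : ∀ n, ‖b n‖ ≤ M) (hR : 0 ≤ R) (hz : R < ‖z‖)
    {n : WithTop ℕ∞} : ContDiffAt ℂ n (fun w => outerSeries b (R / w)) z :=
  (differentiableOn_outerSeries_div hb hR).contDiffOn (isOpen_lt continuous_const continuous_norm)
    |>.contDiffAt ((isOpen_lt continuous_const continuous_norm).mem_nhds hz)

/-- Cauchy's estimate on the disc of radius `‖z‖ / 6`, on which `‖w‖ ≥ (5/4) R`. -/
lemma norm_iteratedDeriv_two_outerSeries_div_le (hb : ∀ n, ‖b n‖ ≤ M) (hR : 0 < R)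
    (hz : 3 / 2 * R ≤ ‖z‖) :
    ‖iteratedDeriv 2 (fun w => outerSeries b (R / w)) z‖ ≤ 432 * M * R / ‖z‖ ^ 3 := by
  have hz₀ : 0 < ‖z‖ := by linarith
  have hfar : ∀ w ∈ closedBall z (‖z‖ / 6), 5 / 6 * ‖z‖ ≤ ‖w‖ := fun w hw => by
    have := norm_sub_norm_le z w
    rw [mem_closedBall, dist_eq_norm, ← norm_neg, neg_sub] at hw
    linarith
  have hdiff : DiffContOnCl ℂ (fun w => outerSeries b (R / w)) (ball z (‖z‖ / 6)) :=
    ((differentiableOn_outerSeries_div hb hR.le).mono fun w hw => by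
      have := hfar w hw; show R < ‖w‖; linarith).mono closure_ball_subset_closedBall
      |>.diffContOnCl
  have hsphere : ∀ w ∈ sphere z (‖z‖ / 6), ‖outerSeries b (R / w)‖ ≤ 6 * M * R / ‖z‖ := by
    intro w hw
    have hw' := hfar w (sphere_subset_closedBall hw)
    have hM : 0 ≤ M := (norm_nonneg _).trans (hb 0)
    have hq : ‖(R : ℂ) / w‖ = R / ‖w‖ := by rw [norm_div, norm_real, Real.norm_of_nonneg hR.le]
    have hq' : R / ‖w‖ ≤ 4 / 5 := by
      rw [div_le_iff₀ (by linarith)]; linarith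
    calc ‖outerSeries b (R / w)‖ ≤ M * (R / ‖w‖) / (1 - R / ‖w‖) := by
          rw [← hq]; exact norm_outerSeries_le hb (by rw [hq]; linarith)
      _ ≤ M * (R / (5 / 6 * ‖z‖)) / (1 - 4 / 5) := by gcongr
      _ = 6 * M * R / ‖z‖ := by field_simp; ring
  calc ‖iteratedDeriv 2 (fun w => outerSeries b (R / w)) z‖
      ≤ (Nat.factorial 2) * (6 * M * R / ‖z‖) / (‖z‖ / 6) ^ 2 :=
        norm_iteratedDeriv_le_of_forall_mem_sphere_norm_le 2 (by positivity) hdiff hsphere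
    _ = 432 * M * R / ‖z‖ ^ 3 := by rw [Nat.factorial_two]; field_simp; ring

lemma norm_iteratedFDeriv_two_outerSeries_div_le (hb : ∀ n, ‖b n‖ ≤ M) (hR : 0 < R)
    (hz : 3 / 2 * R ≤ ‖z‖) :
    ‖iteratedFDeriv ℝ 2 (fun w => outerSeries b (R / w)) z‖ ≤ 432 * M * R / ‖z‖ ^ 3 := by
  rw [norm_iteratedFDeriv_real_eq_norm_iteratedDeriv
    (contDiffAt_outerSeries_div hb hR.le (by linarith))]
  exact norm_iteratedDeriv_two_outerSeries_div_le hb hR hz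

end OuterSeries

lemma ofReal_div_norm_mul_div_norm (R : ℝ) (w : ℂ) :
    ((R / ‖w‖ : ℝ) : ℂ) * (w / ‖w‖) = R / conj w := by
  rcases eq_or_ne w 0 with rfl | hw
  · simp
  rw [ofReal_div, div_mul_div_comm, ← ofReal_mul, ← sq, ← normSq_eq_norm_sq, ← mul_conj,
    mul_comm w, mul_div_mul_right _ _ hw]

lemma ofReal_div_norm_div_div_norm (R : ℝ) (w : ℂ) :
    ((R / ‖w‖ : ℝ) : ℂ) / (w / ‖w‖) = R / w := by
  rcases eq_or_ne w 0 with rfl | hw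
  · simp
  have hw' : (‖w‖ : ℂ) ≠ 0 := by simpa using hw
  rw [ofReal_div]
  field_simp

lemma norm_le_of_tsum_sq_le {ι : Type*} {a : ι → ℂ} {M : ℝ} (hM : 0 ≤ M)
    (hs : Summable fun i => ‖a i‖ ^ 2) (hle : ∑' i, ‖a i‖ ^ 2 ≤ M ^ 2) (i : ι) : ‖a i‖ ≤ M :=
  le_of_sq_le_sq ((hs.le_tsum i fun j _ => by positivity).trans hle) hM

lemma tsum_exterior_eq_outerSeries {a : ℤ → ℂ} {M R : ℝ} (ha : ∀ k, ‖a k‖ ≤ M) (hR : 0 ≤ R)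
    {w : ℂ} (hw : R < ‖w‖) :
    ∑' k : ℤ, a k * (((R / ‖w‖) ^ k.natAbs : ℝ) : ℂ) * (w / ‖w‖) ^ k =
      outerSeries (fun n => a (n + 1)) (R / conj w) + a 0 +
        outerSeries (fun n => a (-(n + 1))) (R / w) := by
  have hpos (n : ℕ) : a (n + 1) * (((R / ‖w‖) ^ ((n : ℤ) + 1).natAbs : ℝ) : ℂ) *
      (w / ‖w‖) ^ ((n : ℤ) + 1) = a (n + 1) * (R / conj w) ^ (n + 1) := by
    rw [← ofReal_div_norm_mul_div_norm, mul_pow, ← mul_assoc]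
    norm_cast
  have hneg (n : ℕ) : a (-(n + 1)) * (((R / ‖w‖) ^ (-((n : ℤ) + 1)).natAbs : ℝ) : ℂ) *
      (w / ‖w‖) ^ (-((n : ℤ) + 1)) = a (-(n + 1)) * (R / w) ^ (n + 1) := by
    have hk : -((n : ℤ) + 1) = -((n + 1 : ℕ) : ℤ) := by push_cast; rfl
    rw [hk, Int.natAbs_neg, Int.natAbs_natCast, zpow_neg, zpow_natCast, ofReal_pow, mul_assoc,
      ← div_eq_mul_inv, ← div_pow, ofReal_div_norm_div_div_norm]
  have hconj : ‖(R : ℂ) / conj w‖ < 1 := by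
    rw [← conj_ofReal, ← map_div₀, norm_conj]
    exact norm_div_lt_one hR hw
  have hs₁ := (summable_outerSeries_term (fun n => ha (n + 1)) hconj).congr
    fun n => (hpos n).symm
  have hs₂ := (summable_outerSeries_term (fun n => ha (-(n + 1))) (norm_div_lt_one hR hw)).congr
    fun n => (hneg n).symm
  rw [tsum_of_add_one_of_neg_add_one (f := fun k : ℤ =>
    a k * (((R / ‖w‖) ^ k.natAbs : ℝ) : ℂ) * (w / ‖w‖) ^ k) hs₁ hs₂]
  simp only [hpos, hneg, outerSeries, Int.natAbs_zero, pow_zero, zpow_zero, ofReal_one, mul_one]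

/-- **Decay of the Hessian of the exterior harmonic extension.**
There is an absolute constant `C > 0` such that: for all `R > 0`, `M ≥ 0` and square
summable boundary Fourier coefficients `(a_k)` with `∑_{k∈ℤ} |a_k|² ≤ M²`, the exterior
harmonic extension `w(z) = ∑_{k∈ℤ} a_k (R/|z|)^{|k|} (z/|z|)^k` satisfies
`‖D²w(z)‖ ≤ C M R |z|⁻³` for all `z` with `|z| ≥ (3/2) R`. -/
theorem stmt_8 :
    ∃ C : ℝ, 0 < C ∧ ∀ (R M : ℝ), 0 < R → 0 ≤ M → ∀ a : ℤ → ℂ,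
      Summable (fun k : ℤ => ‖a k‖ ^ 2) →
      (∑' k : ℤ, ‖a k‖ ^ 2) ≤ M ^ 2 →
      ∀ z : ℂ, (3 / 2) * R ≤ ‖z‖ →
        ‖iteratedFDeriv ℝ 2
            (fun w : ℂ =>
              ∑' k : ℤ, a k * (((R / ‖w‖) ^ k.natAbs : ℝ) : ℂ) *
                (w / ‖w‖) ^ k) z‖
          ≤ C * M * R * ((‖z‖) ^ 3)⁻¹ := by
  refine ⟨864, by norm_num, fun R M hR hM a hs hle z hz => ?_⟩
  have ha := norm_le_of_tsum_sq_le hM hs hle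
  set Q := fun w : ℂ => outerSeries (fun n => a (n + 1)) (R / w)
  set P := fun w : ℂ => outerSeries (fun n => a (-(n + 1))) (R / w)
  have hzR : R < ‖z‖ := by linarith
  have hz' : 3 / 2 * R ≤ ‖conjLIE z‖ := by rwa [conjLIE_apply, norm_conj]
  have hQ : ContDiffAt ℝ 2 (Q ∘ conjLIE) z :=
    ((contDiffAt_outerSeries_div (fun n => ha _) hR.le (by linarith)).restrict_scalars ℝ).comp z
      conjLIE.contDiff.contDiffAt
  have hP : ContDiffAt ℝ 2 P z :=
    (contDiffAt_outerSeries_div (fun n => ha _) hR.le hzR).restrict_scalars ℝ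
  have hQc : ContDiffAt ℝ 2 (Q ∘ conjLIE + fun _ => a 0) z := hQ.add contDiffAt_const
  have hsplit : (fun w : ℂ => ∑' k : ℤ, a k * (((R / ‖w‖) ^ k.natAbs : ℝ) : ℂ) * (w / ‖w‖) ^ k)
      =ᶠ[𝓝 z] Q ∘ conjLIE + (fun _ => a 0) + P :=
    eventually_of_mem ((isOpen_lt continuous_const continuous_norm).mem_nhds hzR) fun w hw =>
      tsum_exterior_eq_outerSeries ha hR.le hw
  rw [(hsplit.iteratedFDeriv ℝ 2).eq_of_nhds, iteratedFDeriv_add_apply hQc hP,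
    iteratedFDeriv_add_apply hQ contDiffAt_const, iteratedFDeriv_const_of_ne two_ne_zero,
    Pi.zero_apply, add_zero]
  calc _ ≤ ‖iteratedFDeriv ℝ 2 (Q ∘ conjLIE) z‖ + ‖iteratedFDeriv ℝ 2 P z‖ := norm_add_le _ _
    _ ≤ 432 * M * R / ‖conjLIE z‖ ^ 3 + 432 * M * R / ‖z‖ ^ 3 := by
      rw [conjLIE.norm_iteratedFDeriv_comp_right]
      gcongr
      · exact norm_iteratedFDeriv_two_outerSeries_div_le (fun n => ha _) hR hz'
      · exact norm_iteratedFDeriv_two_outerSeries_div_le (fun n => ha _) hR hz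
    _ = 864 * M * R * (‖z‖ ^ 3)⁻¹ := by rw [conjLIE_apply, norm_conj]; ring
end
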